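/- For all real parameters p, q, the 5-dimensional example is Sasaki-like: for all x, y ∈ 𝔤 one has ∇ₓ(φy) - φ(∇ₓy) = -g(x, y)ξ - η(y)x + 2η(x)η(y)ξ. -/
import Mathlib


noncomputable section

/-- The underlying 5-dimensional real vector space. -/
abbrev V5 := Fin 5 → ℝ

/-- The basis `(e₀, e₁, e₂, e₃, e₄)` (standard basis of `ℝ⁵`). -/
def e5 (i : Fin 5) : V5 := Pi.single i 1

/-- The Lie bracket: the bilinear extension of
`[e₀,e₁] = p e₂ + e₃ + q e₄`, `[e₀,e₂] = -p e₁ - q e₃ + e₄`,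
`[e₀,e₃] = -e₁ - q e₂ + p e₄`, `[e₀,e₄] = q e₁ - e₂ - p e₃`,
all other brackets of basis vectors being zero. -/
def br5 (p q : ℝ) (x y : V5) : V5 :=
  (x 0 * y 1 - y 0 * x 1) • (![0, 0, p, 1, q] : V5)
    + (x 0 * y 2 - y 0 * x 2) • (![0, -p, 0, -q, 1] : V5)
    + (x 0 * y 3 - y 0 * x 3) • (![0, -1, -q, 0, p] : V5)
    + (x 0 * y 4 - y 0 * x 4) • (![0, q, -1, -p, 0] : V5)

/-- The B-metric `g`: `g(e₀,e₀) = g(e₁,e₁) = g(e₂,e₂) = 1`,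
`g(e₃,e₃) = g(e₄,e₄) = -1`, `g(eᵢ,eⱼ) = 0` for `i ≠ j`. -/
def gM5 (x y : V5) : ℝ :=
  x 0 * y 0 + x 1 * y 1 + x 2 * y 2 - x 3 * y 3 - x 4 * y 4

/-- The structure endomorphism `φ`:
`φe₁ = e₃`, `φe₂ = e₄`, `φe₃ = -e₁`, `φe₄ = -e₂`, `φe₀ = 0`. -/
def phi5 (x : V5) : V5 := ![0, -(x 3), -(x 4), x 1, x 2]

/-- The Reeb vector field `ξ = e₀`. -/
def xi5 : V5 := e5 0

/-- The contact form `η`: `η(e₀) = 1`, `η(eᵢ) = 0` for `i = 1,…,4`. -/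
def eta5 (x : V5) : ℝ := x 0

/-- The Koszul formula for the Levi-Civita connection of a left-invariant metric. -/
def Koszul5 (p q : ℝ) (nabla : V5 → V5 → V5) : Prop :=
  ∀ x y z : V5,
    2 * gM5 (nabla x y) z
      = gM5 (br5 p q x y) z - gM5 (br5 p q y z) x + gM5 (br5 p q z x) y

/-- The curvature tensor `R(x,y)z = ∇ₓ∇_y z - ∇_y ∇ₓ z - ∇_{[x,y]} z`. -/
def R5 (p q : ℝ) (nabla : V5 → V5 → V5) (x y z : V5) : V5 :=
  nabla x (nabla y z) - nabla y (nabla x z) - nabla (br5 p q x y) z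

/-- The Ricci tensor `ρ(y,z)`: the trace of the map `x ↦ R(x,y)z`,
computed in the standard basis. -/
def ric5 (p q : ℝ) (nabla : V5 → V5 → V5) (y z : V5) : ℝ :=
  ∑ i : Fin 5, R5 p q nabla (e5 i) y z i

/-- Explicit formula for the Levi-Civita connection. -/
def N5 (p q : ℝ) (x y : V5) : V5 :=
  ![-(x 1 * y 3 + x 2 * y 4 + x 3 * y 1 + x 4 * y 2),
    -(p * (x 0 * y 2)) + q * (x 0 * y 4) + x 3 * y 0,
    p * (x 0 * y 1) - q * (x 0 * y 3) + x 4 * y 0,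
    -(q * (x 0 * y 2)) - p * (x 0 * y 4) - x 1 * y 0,
    q * (x 0 * y 1) + p * (x 0 * y 3) - x 2 * y 0]

lemma g_ext (v w : V5) (h : ∀ z, gM5 v z = gM5 w z) : v = w := by
  funext i
  fin_cases i
  · have := h (e5 0); simp [gM5, e5, Pi.single_apply] at this; exact this
  · have := h (e5 1); simp [gM5, e5, Pi.single_apply] at this; exact this
  · have := h (e5 2); simp [gM5, e5, Pi.single_apply] at this; exact this
  · have := h (e5 3); simp [gM5, e5, Pi.single_apply] at this; exact this
  · have := h (e5 4); simp [gM5, e5, Pi.single_apply] at this; exact this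

lemma nabla_eq (p q : ℝ) (nabla : V5 → V5 → V5) (hK : Koszul5 p q nabla) :
    ∀ x y : V5, nabla x y = N5 p q x y := by
  intro x y
  apply g_ext
  intro z
  have h := hK x y z
  have h2 : 2 * gM5 (N5 p q x y) z
      = gM5 (br5 p q x y) z - gM5 (br5 p q y z) x + gM5 (br5 p q z x) y := by
    simp only [N5, br5, gM5, Pi.add_apply, Pi.smul_apply, smul_eq_mul,
      Matrix.cons_val_zero, Matrix.cons_val_one, Matrix.head_cons,
      Matrix.cons_val_two, Matrix.tail_cons, Matrix.cons_val_three,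
      Matrix.cons_val_four]
    ring
  linarith

/-- For all real parameters `p, q`, the 5-dimensional example is Sasaki-like:
`∇ₓ(φy) - φ(∇ₓy) = -g(x,y)ξ - η(y)x + 2η(x)η(y)ξ` for all `x, y`. -/
theorem sasaki_like_5dim (p q : ℝ) (nabla : V5 → V5 → V5) (hK : Koszul5 p q nabla) :
    ∀ x y : V5,
      nabla x (phi5 y) - phi5 (nabla x y)
        = -(gM5 x y) • xi5 - eta5 y • x + (2 * (eta5 x * eta5 y)) • xi5 := by
  intro x y
  rw [nabla_eq p q nabla hK, nabla_eq p q nabla hK]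
  funext i
  fin_cases i <;>
    simp [N5, phi5, gM5, xi5, eta5, e5, Pi.single_apply,
      Matrix.cons_val_zero, Matrix.cons_val_one, Matrix.head_cons] <;> ring
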